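/- Let φ : ℝ² → ℝ be a weighted homogeneous polynomial of type (d − w₂; w₁, w₂) with w₁ > w₂, such that the origin is an isolated zero of ∂φ/∂x₁ (i.e. ∂φ/∂x₁ vanishes only at 0 in some neighborhood of 0), and set f(x₁, x₂) = x₂·φ(x₁, x₂). Then there exist C > 0 and a neighborhood U of 0 such that ‖∇f(x)‖ ≥ C‖x‖^{(d−w₁)/w₂} for all x ∈ U. -/

import Mathlib

open MvPolynomial

/-- Euclidean norm of the gradient of a polynomial `f` at `x`. -/
noncomputable def gradNorm {n : ℕ} (f : MvPolynomial (Fin n) ℝ) (x : Fin n → ℝ) : ℝ :=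
  Real.sqrt (∑ i, (eval x (pderiv i f)) ^ 2)

/-- Euclidean norm on `Fin n → ℝ`. -/
noncomputable def eNorm {n : ℕ} (x : Fin n → ℝ) : ℝ :=
  Real.sqrt (∑ i, (x i) ^ 2)

/-- `f` is weighted homogeneous of type `(d; w)`: every monomial `x^α` appearing in `f`
satisfies `∑ i, α i * w i = d`. -/
def IsWeightedHomog {n : ℕ} (f : MvPolynomial (Fin n) ℝ) (w : Fin n → ℕ) (d : ℕ) : Prop :=
  ∀ α ∈ f.support, ∑ i, α i * w i = d

/-- `f` is non-degenerate (isolated singularity at the origin): in some neighborhood of `0`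
the gradient of `f` vanishes only at the origin. -/
def Nondeg {n : ℕ} (f : MvPolynomial (Fin n) ℝ) : Prop :=
  ∃ U ∈ nhds (0 : Fin n → ℝ), ∀ x ∈ U, (∀ i, eval x (pderiv i f) = 0) → x = 0

/-- The Łojasiewicz inequality `‖∇f(x)‖ ≥ C ‖x‖^lam` holds near `0` for some `C > 0`. -/
def LojIneq {n : ℕ} (f : MvPolynomial (Fin n) ℝ) (lam : ℝ) : Prop :=
  ∃ C > (0 : ℝ), ∃ U ∈ nhds (0 : Fin n → ℝ), ∀ x ∈ U, C * eNorm x ^ lam ≤ gradNorm f x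

/-- The Łojasiewicz exponent of `f`: the infimum of all `lam > 0` for which the
Łojasiewicz inequality holds near the origin. -/
noncomputable def lojExp {n : ℕ} (f : MvPolynomial (Fin n) ℝ) : ℝ :=
  sInf {lam : ℝ | 0 < lam ∧ LojIneq f lam}

/-- The weighted "radius" `ρ(x) = (∑ i |x i| ^ (2 / w i)) ^ (1/2)`. -/
noncomputable def rho {n : ℕ} (w : Fin n → ℕ) (x : Fin n → ℝ) : ℝ :=
  Real.sqrt (∑ i, |x i| ^ ((2 : ℝ) / (w i : ℝ)))

/-- The weighted norm of the gradient:
`‖grad_w f(x)‖_w = (∑ i ρ(x)^(2 wᵢ) |∂f/∂xᵢ(x)|²)^(1/2)`. -/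
noncomputable def wGradNorm {n : ℕ} (w : Fin n → ℕ) (f : MvPolynomial (Fin n) ℝ)
    (x : Fin n → ℝ) : ℝ :=
  Real.sqrt (∑ i, rho w x ^ (2 * w i) * (eval x (pderiv i f)) ^ 2)


/-!
Write `x = t • u` for the weighted dilation `t • u = (t ^ w₁ u₁, t ^ w₂ u₂)`, with `t = ρ(x)` the
weighted radius and `ρ(u) = 1`; then a weighted homogeneous `p` of degree `m` satisfies
`p(x) = t ^ m p(u)`, and minima over the compact weighted sphere `ρ = 1` give uniform bounds.
By homogeneity the isolated zero of `∂₁φ` is its only zero, so `|∂₁φ| ≥ m₁` on the sphere;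
by Euler's identity `φ` does not vanish on the `x₁`-axis, so `|u₂| + |∂₂f(u)| ≥ m₂` there.
Near the origin, where `|x₂| ≥ t ^ w₁` we have `‖x‖ ≤ 2|x₂|` and `∂₁f = x₂ ∂₁φ` gives the bound;
where `|x₂| < t ^ w₁` we have `‖x‖ ≤ 2 t ^ w₁`, `u` is close to the axis, and `∂₂f` gives the
bound because `w₁ λ ≥ d - w₂` for `λ = (d - w₁) / w₂`. In Lean, `xᵢ` is the coordinate `i - 1`.
-/

theorem isWeightedHomog_iff {n : ℕ} {p : MvPolynomial (Fin n) ℝ} {w : Fin n → ℕ} {m : ℕ} :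
    IsWeightedHomog p w m ↔ p.IsWeightedHomogeneous w m := by
  simp only [IsWeightedHomog, IsWeightedHomogeneous, mem_support_iff, Finsupp.weight_apply,
    smul_eq_mul, Finsupp.sum_fintype, zero_mul, implies_true]

def weightedScale {σ R : Type*} [Monoid R] (w : σ → ℕ) (t : R) (x : σ → R) : σ → R :=
  fun i => t ^ w i * x i

namespace MvPolynomial.IsWeightedHomogeneous

variable {σ R : Type*} [CommSemiring R] {w : σ → ℕ} {m : ℕ} {p : MvPolynomial σ R}

theorem eval_weightedScale (hp : p.IsWeightedHomogeneous w m) (t : R) (x : σ → R) :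
    eval (weightedScale w t x) p = t ^ m * eval x p := by
  induction hp using IsWeightedHomogeneous.induction_on with
  | zero => simp
  | add p q _ _ hp hq => simp only [map_add, hp, hq, mul_add]
  | monomial d r hd =>
    simp only [eval_monomial, weightedScale, mul_pow, ← pow_mul', ← hd, Finsupp.weight_apply,
      Finsupp.sum, Finsupp.prod, smul_eq_mul, Finset.prod_mul_distrib, Finset.prod_pow_eq_pow_sum]
    ring

theorem le_of_pderiv_ne_zero (hp : p.IsWeightedHomogeneous w m) {i : σ}
    (hi : pderiv i p ≠ 0) : w i ≤ m := by
  obtain ⟨β, hβ⟩ := ne_zero_iff.mp hi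
  rw [coeff_pderiv] at hβ
  rw [← hp (left_ne_zero_of_mul hβ), map_add, Finsupp.weight_single, one_smul]
  exact Nat.le_add_left _ _

theorem pderiv_tsub (hp : p.IsWeightedHomogeneous w m) (i : σ) :
    (pderiv i p).IsWeightedHomogeneous w (m - w i) := by
  by_cases hi : w i ≤ m
  · exact hp.pderiv (Nat.sub_add_cancel hi)
  · rw [not_imp_comm.mp hp.le_of_pderiv_ne_zero hi]
    exact isWeightedHomogeneous_zero _ _ _

end MvPolynomial.IsWeightedHomogeneous

open Filter Topology

section WeightedScale

variable {σ : Type*} {w : σ → ℕ}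

@[simp]
theorem weightedScale_zero_right (t : ℝ) : weightedScale w t (0 : σ → ℝ) = 0 := by
  ext; simp [weightedScale]

theorem weightedScale_weightedScale (s t : ℝ) (x : σ → ℝ) :
    weightedScale w s (weightedScale w t x) = weightedScale w (s * t) x := by
  ext; simp only [weightedScale, mul_pow]; ring

theorem weightedScale_inv_weightedScale {t : ℝ} (ht : t ≠ 0) (x : σ → ℝ) :
    weightedScale w t⁻¹ (weightedScale w t x) = x := by
  rw [weightedScale_weightedScale, inv_mul_cancel₀ ht]
  ext; simp [weightedScale]

theorem tendsto_weightedScale_zero (hw : ∀ i, w i ≠ 0) (x : σ → ℝ) :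
    Tendsto (fun t : ℝ => weightedScale w t x) (𝓝 0) (𝓝 0) := by
  have hcont : Continuous (fun t : ℝ => weightedScale w t x) :=
    continuous_pi fun i => (continuous_pow (w i)).mul continuous_const
  have hzero : weightedScale w 0 x = 0 := by ext i; simp [weightedScale, zero_pow (hw i)]
  exact hzero ▸ hcont.tendsto 0

theorem MvPolynomial.IsWeightedHomogeneous.eq_zero_of_isolated {p : MvPolynomial σ ℝ} {m : ℕ}
    (hp : p.IsWeightedHomogeneous w m) (hw : ∀ i, w i ≠ 0)
    (hiso : ∃ U ∈ 𝓝 (0 : σ → ℝ), ∀ x ∈ U, eval x p = 0 → x = 0)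
    {x : σ → ℝ} (hx : eval x p = 0) : x = 0 := by
  obtain ⟨U, hU, hUzero⟩ := hiso
  obtain ⟨t, htU, ht⟩ := (((tendsto_weightedScale_zero hw x).eventually_mem hU).filter_mono
    nhdsWithin_le_nhds |>.and self_mem_nhdsWithin).exists (f := 𝓝[>] (0 : ℝ))
  have hscaled : weightedScale w t x = 0 :=
    hUzero _ htU (by rw [hp.eval_weightedScale, hx, mul_zero])
  rw [← weightedScale_inv_weightedScale (ne_of_gt ht) x, hscaled, weightedScale_zero_right]

end WeightedScale

section WeightedRadius

variable {n : ℕ} {w : Fin n → ℕ}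

theorem continuous_rho : Continuous (rho w) :=
  Real.continuous_sqrt.comp <| continuous_finsetSum _ fun i _ =>
    (continuous_abs.comp (continuous_apply i)).rpow_const fun _ => Or.inr (by positivity)

theorem rho_pos {x : Fin n → ℝ} (hx : x ≠ 0) : 0 < rho w x := by
  obtain ⟨i, hi⟩ := Function.ne_iff.mp hx
  refine Real.sqrt_pos.mpr (lt_of_lt_of_le ?_ (Finset.single_le_sum (fun j _ =>
    Real.rpow_nonneg (abs_nonneg (x j)) _) (Finset.mem_univ i)))
  exact Real.rpow_pos_of_pos (abs_pos.mpr hi) _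

noncomputable def sphereProj (w : Fin n → ℕ) (x : Fin n → ℝ) : Fin n → ℝ :=
  weightedScale w (rho w x)⁻¹ x

theorem weightedScale_rho_sphereProj {x : Fin n → ℝ} (hx : x ≠ 0) :
    weightedScale w (rho w x) (sphereProj w x) = x := by
  rw [sphereProj, weightedScale_weightedScale, mul_inv_cancel₀ (rho_pos hx).ne']
  ext; simp [weightedScale]

theorem rho_pow_mul_sphereProj {x : Fin n → ℝ} (hx : x ≠ 0) (i : Fin n) :
    rho w x ^ w i * sphereProj w x i = x i :=
  congrFun (weightedScale_rho_sphereProj hx) i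

theorem MvPolynomial.IsWeightedHomogeneous.eval_eq_rho_pow_mul {p : MvPolynomial (Fin n) ℝ}
    {m : ℕ} (hp : p.IsWeightedHomogeneous w m) {x : Fin n → ℝ} (hx : x ≠ 0) :
    eval x p = rho w x ^ m * eval (sphereProj w x) p := by
  conv_lhs => rw [← weightedScale_rho_sphereProj (w := w) hx]
  exact hp.eval_weightedScale _ _

variable (hw : ∀ i, w i ≠ 0)
include hw

theorem rho_zero : rho w 0 = 0 := by
  simp [rho, Real.zero_rpow, hw]

theorem ne_zero_of_rho_eq_one {x : Fin n → ℝ} (hx : rho w x = 1) : x ≠ 0 := by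
  rintro rfl
  simp [rho_zero hw] at hx

theorem rho_weightedScale {t : ℝ} (ht : 0 ≤ t) (x : Fin n → ℝ) :
    rho w (weightedScale w t x) = t * rho w x := by
  have hterm (i : Fin n) : |t ^ w i * x i| ^ (2 / (w i : ℝ)) = t ^ 2 * |x i| ^ (2 / (w i : ℝ)) := by
    rw [abs_mul, abs_of_nonneg (pow_nonneg ht _), Real.mul_rpow (by positivity) (abs_nonneg _),
      ← Real.rpow_natCast, ← Real.rpow_mul ht, mul_div_cancel₀ _ (by exact_mod_cast hw i),
      Real.rpow_two]
  simp only [rho, weightedScale, hterm, ← Finset.mul_sum]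
  rw [Real.sqrt_mul (by positivity), Real.sqrt_sq ht]

theorem abs_le_one_of_rho_eq_one {x : Fin n → ℝ} (hx : rho w x = 1) (i : Fin n) :
    |x i| ≤ 1 := by
  have hsum : ∑ j, |x j| ^ (2 / (w j : ℝ)) = 1 := Real.sqrt_eq_one.mp hx
  have hle : |x i| ^ (2 / (w i : ℝ)) ≤ 1 := hsum ▸ Finset.single_le_sum
    (f := fun j => |x j| ^ (2 / (w j : ℝ))) (fun j _ => by positivity) (Finset.mem_univ i)
  have hexp : 0 < 2 / (w i : ℝ) := div_pos two_pos (by exact_mod_cast Nat.pos_of_ne_zero (hw i))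
  exact not_lt.mp fun h => (Real.one_lt_rpow h hexp).not_ge hle

theorem isCompact_rho_eq_one : IsCompact {x : Fin n → ℝ | rho w x = 1} := by
  refine Metric.isCompact_of_isClosed_isBounded (isClosed_eq continuous_rho continuous_const) ?_
  refine (Metric.isBounded_closedBall (x := 0) (r := 1)).subset fun x hx => ?_
  rw [mem_closedBall_zero_iff, pi_norm_le_iff_of_nonneg zero_le_one]
  exact abs_le_one_of_rho_eq_one hw hx

theorem rho_sphereProj {x : Fin n → ℝ} (hx : x ≠ 0) : rho w (sphereProj w x) = 1 := by
  rw [sphereProj, rho_weightedScale hw (inv_nonneg.mpr (rho_pos hx).le),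
    inv_mul_cancel₀ (rho_pos hx).ne']

theorem abs_le_rho_pow (x : Fin n → ℝ) (i : Fin n) : |x i| ≤ rho w x ^ w i := by
  rcases eq_or_ne x 0 with rfl | hx
  · simp [rho_zero hw, zero_pow (hw i)]
  rw [← rho_pow_mul_sphereProj hx, abs_mul, abs_of_nonneg (pow_nonneg (rho_pos hx).le _)]
  exact mul_le_of_le_one_right (pow_nonneg (rho_pos hx).le _)
    (abs_le_one_of_rho_eq_one hw (rho_sphereProj hw hx) i)

theorem exists_pos_le_abs_eval_of_eval_eq_zero {p : MvPolynomial (Fin n) ℝ}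
    (hzero : ∀ x, eval x p = 0 → x = 0) : ∃ c > 0, ∀ u, rho w u = 1 → c ≤ |eval u p| :=
  (isCompact_rho_eq_one hw).exists_forall_le' (continuous_abs.comp (continuous_eval p)).continuousOn
    fun u hu => abs_pos.mpr (mt (hzero u) (ne_zero_of_rho_eq_one hw hu))

end WeightedRadius

theorem eNorm_nonneg {n : ℕ} (x : Fin n → ℝ) : 0 ≤ eNorm x :=
  Real.sqrt_nonneg _

theorem abs_le_eNorm {n : ℕ} (x : Fin n → ℝ) (i : Fin n) : |x i| ≤ eNorm x :=
  Real.abs_le_sqrt (Finset.single_le_sum (f := fun j => x j ^ 2) (fun _ _ => sq_nonneg _)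
    (Finset.mem_univ i))

theorem eNorm_le_abs_add_abs (x : Fin 2 → ℝ) : eNorm x ≤ |x 0| + |x 1| := by
  rw [eNorm, Real.sqrt_le_iff, Fin.sum_univ_two, add_sq, sq_abs, sq_abs]
  exact ⟨add_nonneg (abs_nonneg _) (abs_nonneg _),
    by nlinarith [abs_nonneg (x 0), abs_nonneg (x 1)]⟩

theorem abs_eval_pderiv_le_gradNorm {n : ℕ} (f : MvPolynomial (Fin n) ℝ) (x : Fin n → ℝ)
    (i : Fin n) : |eval x (pderiv i f)| ≤ gradNorm f x :=
  Real.abs_le_sqrt (Finset.single_le_sum (f := fun j => eval x (pderiv j f) ^ 2)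
    (fun _ _ => sq_nonneg _) (Finset.mem_univ i))

section XOneMul

variable {w : Fin 2 → ℕ} {φ : MvPolynomial (Fin 2) ℝ}

theorem pderiv_zero_X_one_mul : pderiv 0 (X 1 * φ) = X 1 * pderiv 0 φ := by
  simp [pderiv_X_of_ne (show (1 : Fin 2) ≠ 0 by decide)]

theorem pderiv_one_X_one_mul : pderiv 1 (X 1 * φ) = φ + X 1 * pderiv 1 φ := by
  simp [add_comm]

/-- On the `x₁`-axis, Euler's identity reads `m φ = w₀ x₀ ∂₀φ`. -/
theorem eval_pderiv_one_X_one_mul_ne_zero {m : ℕ} (hφ : φ.IsWeightedHomogeneous w m)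
    (hw : w 0 ≠ 0) (hzero : ∀ x, eval x (pderiv 0 φ) = 0 → x = 0)
    {x : Fin 2 → ℝ} (hx : x ≠ 0) (hx1 : x 1 = 0) : eval x (pderiv 1 (X 1 * φ)) ≠ 0 := by
  have hx0 : x 0 ≠ 0 := fun h => hx (funext (Fin.forall_fin_two.mpr ⟨h, hx1⟩))
  have heuler := congrArg (eval x) hφ.sum_weight_X_mul_pderiv
  simp only [Fin.sum_univ_two, map_add, eval_mul, map_natCast, eval_X, hx1, zero_mul, mul_zero,
    add_zero, nsmul_eq_mul] at heuler
  rw [pderiv_one_X_one_mul, map_add, eval_mul, eval_X, hx1, zero_mul, add_zero]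
  intro hφx
  rw [hφx, mul_zero] at heuler
  exact mul_ne_zero (Nat.cast_ne_zero.mpr hw) (mul_ne_zero hx0 (mt (hzero x) hx)) heuler

theorem exists_pos_le_abs_add_abs_eval_pderiv_one {m : ℕ} (hφ : φ.IsWeightedHomogeneous w m)
    (hw : ∀ i, w i ≠ 0) (hzero : ∀ x, eval x (pderiv 0 φ) = 0 → x = 0) :
    ∃ c > 0, ∀ u, rho w u = 1 → c ≤ |u 1| + |eval u (pderiv 1 (X 1 * φ))| := by
  refine (isCompact_rho_eq_one hw).exists_forall_le' ((continuous_abs.comp (continuous_apply 1)).add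
    (continuous_abs.comp (continuous_eval _))).continuousOn fun u hu => ?_
  rcases eq_or_ne (u 1) 0 with hu1 | hu1
  · exact add_pos_of_nonneg_of_pos (abs_nonneg _) (abs_pos.mpr
      (eval_pderiv_one_X_one_mul_ne_zero hφ (hw 0) hzero (ne_zero_of_rho_eq_one hw hu) hu1))
  · exact add_pos_of_pos_of_nonneg (abs_pos.mpr hu1) (abs_nonneg _)

variable {d : ℕ}

theorem le_abs_eval_pderiv_zero (hw : ∀ i, w i ≠ 0) (hdeg : w 0 + w 1 ≤ d)
    (hφ0 : (pderiv 0 φ).IsWeightedHomogeneous w (d - w 1 - w 0))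
    {m₁ : ℝ} (hm₁ : 0 ≤ m₁) (hm₁le : ∀ u, rho w u = 1 → m₁ ≤ |eval u (pderiv 0 φ)|)
    {x : Fin 2 → ℝ} (hx : x ≠ 0) (hx1 : rho w x ^ w 0 ≤ |x 1|) :
    m₁ * eNorm x ^ (((d : ℝ) - w 0) / w 1) ≤
      2 ^ (((d : ℝ) - w 0) / w 1) * |eval x (pderiv 0 (X 1 * φ))| := by
  set t := rho w x
  set s := |x 1|
  set lam := ((d : ℝ) - w 0) / w 1
  set k := d - w 1 - w 0
  have ht : 0 < t := rho_pos hx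
  have hs : 0 < s := lt_of_lt_of_le (pow_pos ht _) hx1
  have hw1 : (0 : ℝ) < w 1 := by exact_mod_cast Nat.pos_of_ne_zero (hw 1)
  have hk : (k : ℝ) + w 0 + w 1 = d := by norm_cast; omega
  have hlam : w 1 * (lam - 1) = k := by
    simp only [lam]; field_simp; linarith
  have hlam1 : 0 ≤ lam - 1 := nonneg_of_mul_nonneg_right (hlam ▸ k.cast_nonneg) hw1
  have hnorm : eNorm x ≤ 2 * s :=
    (eNorm_le_abs_add_abs x).trans (by linarith [abs_le_rho_pow hw x 0])
  have hpow : s ^ lam ≤ s * t ^ k := calc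
    s ^ lam = s * s ^ (lam - 1) := by
      rw [← Real.rpow_one_add' hs.le (by linarith), add_sub_cancel]
    _ ≤ s * (t ^ w 1) ^ (lam - 1) := by gcongr; exact abs_le_rho_pow hw x 1
    _ = s * t ^ k := by rw [← Real.rpow_natCast, ← Real.rpow_mul ht.le, hlam, Real.rpow_natCast]
  have heval : m₁ * t ^ k ≤ |eval x (pderiv 0 φ)| := by
    rw [hφ0.eval_eq_rho_pow_mul hx, abs_mul, abs_of_pos (pow_pos ht _), mul_comm]
    exact mul_le_mul_of_nonneg_left (hm₁le _ (rho_sphereProj hw hx)) (pow_nonneg ht.le _)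
  calc m₁ * eNorm x ^ lam ≤ m₁ * (2 * s) ^ lam := by
        gcongr
        · exact eNorm_nonneg x
        · linarith
    _ = 2 ^ lam * s ^ lam * m₁ := by rw [Real.mul_rpow zero_le_two hs.le]; ring
    _ ≤ 2 ^ lam * (s * t ^ k) * m₁ := by gcongr
    _ = 2 ^ lam * (s * (m₁ * t ^ k)) := by ring
    _ ≤ 2 ^ lam * (s * |eval x (pderiv 0 φ)|) := by gcongr
    _ = 2 ^ lam * |eval x (pderiv 0 (X 1 * φ))| := by
      rw [pderiv_zero_X_one_mul, map_mul, eval_X, abs_mul]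

theorem le_abs_eval_pderiv_one (hw : ∀ i, w i ≠ 0) (hw10 : w 1 < w 0) (hdeg : w 0 + w 1 ≤ d)
    (hf1 : (pderiv 1 (X 1 * φ)).IsWeightedHomogeneous w (d - w 1)) {m₂ : ℝ}
    (hm₂le : ∀ u, rho w u = 1 → m₂ ≤ |u 1| + |eval u (pderiv 1 (X 1 * φ))|)
    {x : Fin 2 → ℝ} (hx : x ≠ 0) (ht1 : rho w x ≤ 1) (ht₂ : rho w x ≤ m₂ / 2)
    (hx1 : |x 1| < rho w x ^ w 0) :
    m₂ / 2 * eNorm x ^ (((d : ℝ) - w 0) / w 1) ≤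
      2 ^ (((d : ℝ) - w 0) / w 1) * |eval x (pderiv 1 (X 1 * φ))| := by
  set t := rho w x
  set u := sphereProj w x
  set lam := ((d : ℝ) - w 0) / w 1
  have ht : 0 < t := rho_pos hx
  have hw1 : (0 : ℝ) < w 1 := by exact_mod_cast Nat.pos_of_ne_zero (hw 1)
  have hu1 : |u 1| ≤ m₂ / 2 := by
    have hlt : t ^ w 1 * |u 1| < t ^ w 1 * t ^ (w 0 - w 1) := by
      rwa [← pow_add, Nat.add_sub_cancel' hw10.le, ← abs_of_pos (pow_pos ht (w 1)), ← abs_mul,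
        rho_pow_mul_sphereProj hx]
    exact (lt_of_mul_lt_mul_left hlt (pow_nonneg ht.le _)).le.trans
      ((pow_le_of_le_one ht.le ht1 (by omega)).trans ht₂)
  have heval : m₂ / 2 * t ^ (d - w 1) ≤ |eval x (pderiv 1 (X 1 * φ))| := by
    rw [hf1.eval_eq_rho_pow_mul hx, abs_mul, abs_of_pos (pow_pos ht _), mul_comm]
    gcongr
    linarith [hm₂le u (rho_sphereProj hw hx)]
  have hnorm : eNorm x ≤ 2 * t ^ w 0 :=
    (eNorm_le_abs_add_abs x).trans (by linarith [abs_le_rho_pow hw x 0])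
  have hexp : ((d - w 1 : ℕ) : ℝ) ≤ w 0 * lam := by
    have h10 : (w 1 : ℝ) < w 0 := by exact_mod_cast hw10
    have hd : (w 0 : ℝ) + w 1 ≤ d := by exact_mod_cast hdeg
    rw [Nat.cast_sub (by omega), mul_div_assoc', le_div_iff₀ hw1]
    nlinarith
  have hlam : 0 ≤ lam := div_nonneg (sub_nonneg.mpr (by exact_mod_cast (by omega : w 0 ≤ d))) hw1.le
  calc m₂ / 2 * eNorm x ^ lam ≤ m₂ / 2 * (2 * t ^ w 0) ^ lam := by
        gcongr
        · linarith
        · exact eNorm_nonneg x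
    _ = 2 ^ lam * (m₂ / 2 * t ^ ((w 0 : ℝ) * lam)) := by
        rw [Real.mul_rpow zero_le_two (by positivity), ← Real.rpow_natCast,
          ← Real.rpow_mul ht.le]
        ring
    _ ≤ 2 ^ lam * (m₂ / 2 * t ^ ((d - w 1 : ℕ) : ℝ)) := by
        gcongr 2 ^ lam * (m₂ / 2 * ?_)
        · linarith
        · exact Real.rpow_le_rpow_of_exponent_ge ht ht1 hexp
    _ ≤ 2 ^ lam * |eval x (pderiv 1 (X 1 * φ))| := by
        rw [Real.rpow_natCast]; gcongr

theorem min_mul_eNorm_rpow_le_gradNorm (hw : ∀ i, w i ≠ 0) (hw10 : w 1 < w 0)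
    (hdeg : w 0 + w 1 ≤ d) (hφ0 : (pderiv 0 φ).IsWeightedHomogeneous w (d - w 1 - w 0))
    (hf1 : (pderiv 1 (X 1 * φ)).IsWeightedHomogeneous w (d - w 1)) {m₁ m₂ : ℝ} (hm₁ : 0 ≤ m₁)
    (hm₁le : ∀ u, rho w u = 1 → m₁ ≤ |eval u (pderiv 0 φ)|)
    (hm₂le : ∀ u, rho w u = 1 → m₂ ≤ |u 1| + |eval u (pderiv 1 (X 1 * φ))|)
    {x : Fin 2 → ℝ} (ht1 : rho w x ≤ 1) (ht₂ : rho w x ≤ m₂ / 2) :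
    min m₁ (m₂ / 2) * eNorm x ^ (((d : ℝ) - w 0) / w 1) ≤
      2 ^ (((d : ℝ) - w 0) / w 1) * gradNorm (X 1 * φ) x := by
  rcases eq_or_ne x 0 with rfl | hx
  · have hw1 := hw 1
    have hlam : 0 < ((d : ℝ) - w 0) / w 1 := div_pos (sub_pos.mpr (by exact_mod_cast
      (by omega : w 0 < d))) (by exact_mod_cast Nat.pos_of_ne_zero hw1)
    rw [show eNorm (0 : Fin 2 → ℝ) = 0 by simp [eNorm], Real.zero_rpow hlam.ne', mul_zero]
    exact mul_nonneg (by positivity) (Real.sqrt_nonneg _)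
  rcases le_or_gt (rho w x ^ w 0) |x 1| with hx1 | hx1
  · calc _ ≤ m₁ * eNorm x ^ (((d : ℝ) - w 0) / w 1) :=
          mul_le_mul_of_nonneg_right (min_le_left _ _) (Real.rpow_nonneg (eNorm_nonneg x) _)
      _ ≤ _ := le_abs_eval_pderiv_zero hw hdeg hφ0 hm₁ hm₁le hx hx1
      _ ≤ _ := by gcongr; exact abs_eval_pderiv_le_gradNorm _ _ _
  · calc _ ≤ m₂ / 2 * eNorm x ^ (((d : ℝ) - w 0) / w 1) :=
          mul_le_mul_of_nonneg_right (min_le_right _ _) (Real.rpow_nonneg (eNorm_nonneg x) _)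
      _ ≤ _ := le_abs_eval_pderiv_one hw hw10 hdeg hf1 hm₂le hx ht1 ht₂ hx1
      _ ≤ _ := by gcongr; exact abs_eval_pderiv_le_gradNorm _ _ _

end XOneMul

theorem stmt8_general (d w₁ w₂ : ℕ) (hw₂ : 0 < w₂) (hw : w₂ < w₁)
    (φ : MvPolynomial (Fin 2) ℝ)
    (hhom : IsWeightedHomog φ ![w₁, w₂] (d - w₂))
    (hiso : ∃ U ∈ nhds (0 : Fin 2 → ℝ), ∀ x ∈ U,
      eval x (pderiv 0 φ) = 0 → x = 0)
    (f : MvPolynomial (Fin 2) ℝ) (hf : f = X 1 * φ) :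
    ∃ C > (0 : ℝ), ∃ U ∈ nhds (0 : Fin 2 → ℝ), ∀ x ∈ U,
      C * eNorm x ^ (((d : ℝ) - w₁) / w₂) ≤ gradNorm f x := by
  subst hf
  set w : Fin 2 → ℕ := ![w₁, w₂]
  have hw0 : ∀ i, w i ≠ 0 := Fin.forall_fin_two.mpr ⟨by simp [w]; omega, by simp [w]; omega⟩
  have hφ : φ.IsWeightedHomogeneous w (d - w₂) := isWeightedHomog_iff.mp hhom
  have hzero : ∀ x, eval x (pderiv 0 φ) = 0 → x = 0 :=
    fun x => (hφ.pderiv_tsub 0).eq_zero_of_isolated hw0 hiso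
  have hdeg : w₁ + w₂ ≤ d := by
    have := hφ.le_of_pderiv_ne_zero (i := 0) fun h =>
      one_ne_zero (congrFun (hzero 1 (by simp [h])) 0)
    simp only [w, Matrix.cons_val_zero] at this
    omega
  have hf1 : (pderiv 1 (X 1 * φ)).IsWeightedHomogeneous w (d - w₂) :=
    ((isWeightedHomogeneous_X ℝ w 1).mul hφ).pderiv (by simp [w]; omega)
  obtain ⟨m₁, hm₁, hm₁le⟩ := exists_pos_le_abs_eval_of_eval_eq_zero hw0 hzero
  obtain ⟨m₂, hm₂, hm₂le⟩ := exists_pos_le_abs_add_abs_eval_pderiv_one hφ hw0 hzero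
  refine ⟨min m₁ (m₂ / 2) / 2 ^ (((d : ℝ) - w₁) / w₂), by positivity,
    rho w ⁻¹' Set.Iio (min 1 (m₂ / 2)), continuous_rho.continuousAt.preimage_mem_nhds
      (by rw [rho_zero hw0]; exact Iio_mem_nhds (lt_min one_pos (half_pos hm₂))), fun x hx => ?_⟩
  rw [div_mul_eq_mul_div, div_le_iff₀ (by positivity), mul_comm _ (2 ^ _)]
  exact min_mul_eNorm_rpow_le_gradNorm hw0 (by simpa [w]) (by simpa [w]) (hφ.pderiv_tsub 0) hf1
    hm₁.le hm₁le hm₂le (lt_min_iff.mp hx).1.le (lt_min_iff.mp hx).2.le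

theorem stmt8 (d w₁ w₂ : ℕ) (hw₂ : 0 < w₂) (hw : w₂ < w₁) (hd : w₂ < d)
    (φ : MvPolynomial (Fin 2) ℝ)
    (hhom : IsWeightedHomog φ ![w₁, w₂] (d - w₂))
    (hiso : ∃ U ∈ nhds (0 : Fin 2 → ℝ), ∀ x ∈ U,
      eval x (pderiv 0 φ) = 0 → x = 0)
    (f : MvPolynomial (Fin 2) ℝ) (hf : f = X 1 * φ) :
    ∃ C > (0 : ℝ), ∃ U ∈ nhds (0 : Fin 2 → ℝ), ∀ x ∈ U,
      C * eNorm x ^ (((d : ℝ) - w₁) / w₂) ≤ gradNorm f x :=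
  stmt8_general d w₁ w₂ hw₂ hw φ hhom hiso f hf
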